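/- Let db be an uncertain database, q a Boolean conjunctive query, and s a consistent subset of db that is not grelevant for q in db (i.e., s cannot be extended to a repair r of db in which some fact of s participates in a homomorphic image of q). Let db0 be the union of all blocks of db that meet s. Then every repair of db satisfies q if and only if every repair of db \ db0 satisfies q. -/
import Mathlib


/-- A fact `R(a₁,…,aₙ)`: relation name, primary-key values, non-key values. -/
structure DBFact where
  rel : ℕ
  key : List ℕ
  rest : List ℕ
deriving DecidableEq

/-- Two facts are key-equal if they have the same relation name and primary-key value. -/
def keyEq (A B : DBFact) : Prop := A.rel = B.rel ∧ A.key = B.key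

instance (A B : DBFact) : Decidable (keyEq A B) :=
  inferInstanceAs (Decidable (_ ∧ _))

/-- A set of facts is consistent if it contains no two distinct key-equal facts. -/
def Consistent (s : Finset DBFact) : Prop := ∀ A ∈ s, ∀ B ∈ s, keyEq A B → A = B

/-- A repair of `db` is a maximal (w.r.t. ⊆) consistent subset of `db`. -/
def Repair (db r : Finset DBFact) : Prop :=
  r ⊆ db ∧ Consistent r ∧ ∀ r', r' ⊆ db → Consistent r' → r ⊆ r' → r = r'

/-- A term is a variable (inl) or a constant (inr). -/
abbrev Term := ℕ ⊕ ℕ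

/-- An atom `R(t₁,…,tₙ)` with key positions and non-key positions. -/
structure Atom where
  rel : ℕ
  key : List Term
  rest : List Term
deriving DecidableEq

def termVars (l : List Term) : Finset ℕ := (l.filterMap fun t => t.getLeft?).toFinset

/-- Variables at primary-key positions of an atom. -/
def keyVars (F : Atom) : Finset ℕ := termVars F.key

/-- All variables of an atom. -/
def atomVars (F : Atom) : Finset ℕ := termVars F.key ∪ termVars F.rest

/-- A query (finite set of atoms) is self-join-free: no relation name occurs twice. -/
def SJF (q : Finset Atom) : Prop := ∀ F ∈ q, ∀ G ∈ q, F.rel = G.rel → F = G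

/-- Apply a valuation (total map from variables to constants) to an atom, yielding a fact. -/
def applyVal (θ : ℕ → ℕ) (F : Atom) : DBFact :=
  ⟨F.rel, F.key.map (Sum.elim θ id), F.rest.map (Sum.elim θ id)⟩

/-- Semantic implication of a functional dependency `X → Y` by a set of FDs
(two-tuple semantics, which is equivalent to the standard one for FDs). -/
def FDImplies (fds : Set (Set ℕ × Set ℕ)) (X Y : Set ℕ) : Prop :=
  ∀ θ μ : ℕ → ℕ,
    (∀ p ∈ fds, (∀ v ∈ p.1, θ v = μ v) → ∀ v ∈ p.2, θ v = μ v) →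
    (∀ v ∈ X, θ v = μ v) → ∀ v ∈ Y, θ v = μ v

/-- `FD(q) = { key(F) → vars(F) : F ∈ q }`. -/
def FDs (q : Finset Atom) : Set (Set ℕ × Set ℕ) :=
  {p | ∃ F ∈ q, p = ((keyVars F : Set ℕ), (atomVars F : Set ℕ))}

/-- `F⁺ = { x : FD(q \ {F}) ⊨ key(F) → x }`. -/
def plus (q : Finset Atom) (F : Atom) : Set ℕ :=
  {x | FDImplies (FDs (q.erase F)) (keyVars F : Set ℕ) {x}}

/-- One step of a witness for an attack by `F`: consecutive atoms share a variable outside `F⁺`. -/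
def AttackStep (q : Finset Atom) (F : Atom) (A B : Atom) : Prop :=
  ¬ ((atomVars A ∩ atomVars B : Finset ℕ) : Set ℕ) ⊆ plus q F

/-- `F` attacks `G` in the attack graph of `q`. -/
def Attacks (q : Finset Atom) (F G : Atom) : Prop :=
  F ≠ G ∧ F ∈ q ∧ ∃ L : List Atom, (∀ A ∈ L, A ∈ q) ∧
    List.Chain (AttackStep q F) F L ∧ (F :: L).getLast (List.cons_ne_nil F L) = G

/-- `F` attacks the variable `z`. -/
def AttacksVar (q : Finset Atom) (F : Atom) (z : ℕ) : Prop :=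
  z ∉ plus q F ∧ F ∈ q ∧ ∃ L : List Atom, (∀ A ∈ L, A ∈ q) ∧
    List.Chain (AttackStep q F) F L ∧ z ∈ atomVars ((F :: L).getLast (List.cons_ne_nil F L))

/-- `r ⊨ ζ(q)` for a valuation `ζ` over the variable set `X`. -/
def Sat (r : Finset DBFact) (q : Finset Atom) (X : Finset ℕ) (ζ : ℕ → ℕ) : Prop :=
  ∃ θ : ℕ → ℕ, (∀ v ∈ X, θ v = ζ v) ∧ ∀ F ∈ q, applyVal θ F ∈ r

/-- `r ⊨ q`. -/
def Sat0 (r : Finset DBFact) (q : Finset Atom) : Prop :=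
  ∃ θ : ℕ → ℕ, ∀ F ∈ q, applyVal θ F ∈ r

/-- A fact `A` is relevant for `q` in `r` if `A ∈ θ(q) ⊆ r` for some valuation `θ`. -/
def Relevant (A : DBFact) (q : Finset Atom) (r : Finset DBFact) : Prop :=
  ∃ θ : ℕ → ℕ, (∃ F ∈ q, applyVal θ F = A) ∧ ∀ F ∈ q, applyVal θ F ∈ r

/-- A consistent subset `s` of `db` is grelevant for `q` in `db` if `s` extends to a
repair of `db` in which some fact of `s` is relevant for `q`. -/
def GRelevant (s : Finset DBFact) (q : Finset Atom) (db : Finset DBFact) : Prop :=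
  ∃ r, Repair db r ∧ s ⊆ r ∧ ∃ A ∈ s, Relevant A q r

/-- If `s` is a consistent subset of `db` that is not grelevant for `q` in `db`,
and `db0` is the union of the blocks of `db` meeting `s`, then every repair of `db`
satisfies `q` iff every repair of `db \ db0` satisfies `q`. -/
theorem irrelevant_blocks_can_be_removed (db : Finset DBFact) (q : Finset Atom)
    (s : Finset DBFact) (hs : s ⊆ db) (hcons : Consistent s)
    (hg : ¬ GRelevant s q db) :
    (∀ r, Repair db r → Sat0 r q) ↔
    (∀ r, Repair (db.filter (fun B => ¬ ∃ A ∈ s, keyEq A B)) r → Sat0 r q) := by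
  have ksymm : ∀ {A B}, keyEq A B → keyEq B A := fun h => ⟨h.1.symm, h.2.symm⟩
  have ktrans : ∀ {A B C}, keyEq A B → keyEq B C → keyEq A C :=
    fun h1 h2 => ⟨h1.1.trans h2.1, h1.2.trans h2.2⟩
  set P : DBFact → Prop := fun B => ¬ ∃ A ∈ s, keyEq A B with hP
  set db1 := db.filter (fun B => ¬ ∃ A ∈ s, keyEq A B) with hdb1
  -- db1 membership
  have mem_db1 : ∀ {B}, B ∈ db1 ↔ B ∈ db ∧ P B := by
    intro B; simp [hdb1, hP, Finset.mem_filter]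
  -- union repair lemma
  have union_repair : ∀ r, Repair db1 r → Repair db (r ∪ s) := by
    intro r hr
    obtain ⟨hr1, hr2, hr3⟩ := hr
    have hrdb : ∀ {A}, A ∈ r → A ∈ db ∧ P A := fun hA => mem_db1.mp (hr1 hA)
    refine ⟨?_, ?_, ?_⟩
    · intro B hB
      rcases Finset.mem_union.mp hB with h | h
      · exact (hrdb h).1
      · exact hs h
    · intro A hA B hB hAB
      rcases Finset.mem_union.mp hA with hA | hA <;>
        rcases Finset.mem_union.mp hB with hB | hB
      · exact hr2 A hA B hB hAB
      · exact absurd ⟨B, hB, ksymm hAB⟩ (hrdb hA).2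
      · exact absurd ⟨A, hA, hAB⟩ (hrdb hB).2
      · exact hcons A hA B hB hAB
    · intro r' hr'db hr'cons hsub
      apply Finset.Subset.antisymm hsub
      intro B hB
      by_cases hPB : P B
      · -- B is in a block not meeting s; show B ∈ r via maximality of r in db1
        have hrsub : r ⊆ r'.filter (fun B => ¬ ∃ A ∈ s, keyEq A B) := by
          intro A hA
          exact Finset.mem_filter.mpr ⟨hsub (Finset.mem_union_left _ hA), (hrdb hA).2⟩
        have hsubdb1 : r'.filter (fun B => ¬ ∃ A ∈ s, keyEq A B) ⊆ db1 := by
          intro A hA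
          obtain ⟨hA1, hA2⟩ := Finset.mem_filter.mp hA
          exact mem_db1.mpr ⟨hr'db hA1, hA2⟩
        have hconsf : Consistent (r'.filter (fun B => ¬ ∃ A ∈ s, keyEq A B)) := by
          intro A hA C hC h
          exact hr'cons A (Finset.mem_of_mem_filter _ hA) C (Finset.mem_of_mem_filter _ hC) h
        have := hr3 _ hsubdb1 hconsf hrsub
        rw [this]
        exact Finset.mem_union_left _ (Finset.mem_filter.mpr ⟨hB, hPB⟩)
      · -- B's block meets s: B must be the s-fact
        simp only [hP, not_not] at hPB
        obtain ⟨A, hAs, hAB⟩ := hPB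
        have : A = B := hr'cons A (hsub (Finset.mem_union_right _ hAs)) B hB hAB
        exact Finset.mem_union_right _ (this ▸ hAs)
  -- restriction repair lemma
  have inter_repair : ∀ r, Repair db r → Repair db1 (r.filter (fun B => ¬ ∃ A ∈ s, keyEq A B)) := by
    intro r hr
    obtain ⟨hr1, hr2, hr3⟩ := hr
    refine ⟨?_, ?_, ?_⟩
    · intro B hB
      obtain ⟨hB1, hB2⟩ := Finset.mem_filter.mp hB
      exact mem_db1.mpr ⟨hr1 hB1, hB2⟩
    · intro A hA B hB h
      exact hr2 A (Finset.mem_of_mem_filter _ hA) B (Finset.mem_of_mem_filter _ hB) h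
    · intro r' hr'db1 hr'cons hsub
      apply Finset.Subset.antisymm hsub
      intro B hB
      obtain ⟨hBdb, hPB⟩ := mem_db1.mp (hr'db1 hB)
      have hBr : B ∈ r := by
        by_contra hBr
        have hnotcons : ¬ Consistent (insert B r) := by
          intro hc
          have : r = insert B r := by
            apply hr3
            · intro C hC
              rcases Finset.mem_insert.mp hC with h | h
              · exact h ▸ hBdb
              · exact hr1 h
            · exact hc
            · exact Finset.subset_insert _ _
          exact hBr (this ▸ Finset.mem_insert_self B r)
        -- extract a conflicting fact C ∈ r key-equal to B
        simp only [Consistent, not_forall] at hnotcons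
        obtain ⟨X, hX, Y, hY, hXY, hne⟩ := hnotcons
        rcases Finset.mem_insert.mp hX with hX' | hX' <;>
          rcases Finset.mem_insert.mp hY with hY' | hY'
        · exact hne (hX' ▸ hY' ▸ rfl)
        · -- X = B, Y ∈ r
          subst hX'
          have hPY : P Y := by
            intro ⟨A, hAs, hAY⟩
            exact hPB ⟨A, hAs, ktrans hAY (ksymm hXY)⟩
          have hYr' : Y ∈ r' := hsub (Finset.mem_filter.mpr ⟨hY', hPY⟩)
          exact hne (hr'cons X hB Y hYr' hXY)
        · -- Y = B, X ∈ r
          subst hY'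
          have hPX : P X := by
            intro ⟨A, hAs, hAX⟩
            exact hPB ⟨A, hAs, ktrans hAX hXY⟩
          have hXr' : X ∈ r' := hsub (Finset.mem_filter.mpr ⟨hX', hPX⟩)
          exact hne (hr'cons X hXr' Y hB hXY)
        · exact hne (hr2 X hX' Y hY' hXY)
      exact Finset.mem_filter.mpr ⟨hBr, hPB⟩
  constructor
  · -- ⇒ : uses non-grelevance
    intro h r hr
    have hru : Repair db (r ∪ s) := union_repair r hr
    obtain ⟨θ, hθ⟩ := h _ hru
    refine ⟨θ, fun F hF => ?_⟩
    rcases Finset.mem_union.mp (hθ F hF) with hmem | hmem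
    · exact hmem
    · exact absurd ⟨r ∪ s, hru, Finset.subset_union_right, applyVal θ F, hmem,
        θ, ⟨F, hF, rfl⟩, hθ⟩ hg
  · -- ⇐
    intro h r hr
    obtain ⟨θ, hθ⟩ := h _ (inter_repair r hr)
    exact ⟨θ, fun F hF => Finset.mem_of_mem_filter _ (hθ F hF)⟩
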